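/- Let H₁, H₂ be separable real Hilbert spaces with H₂ finite dimensional, D a compact metric space, and S : M(D,H₁) → H₂ a weak-* to weak continuous linear operator whose range has dimension N_S. Let u = ∑_{n=1}^{P} c_n δ_{x_n} be a discrete measure with pairwise distinct x_n ∈ D and coefficients c_n ∈ H₁. Then there exists u' = ∑_{n=1}^{P} c'_n δ_{x_n} with S u' = S u, total variation norm ‖u'‖ ≤ ‖u‖, and at most N_S of the coefficients c'_n nonzero. -/

import Mathlib

open scoped Classical

open NormedSpace

/-- The `H`-valued vector measure `c δ_x` as an element of the dual of `C(D, H)`. -/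
noncomputable def dirac {D H : Type*} [TopologicalSpace D] [CompactSpace D]
    [NormedAddCommGroup H] [InnerProductSpace ℝ H] (c : H) (x : D) :
    StrongDual ℝ C(D, H) :=
  (innerSL ℝ c).comp (ContinuousMap.evalCLM ℝ x)

lemma dirac_smul {D H : Type*} [TopologicalSpace D] [CompactSpace D]
    [NormedAddCommGroup H] [InnerProductSpace ℝ H] (r : ℝ) (c : H) (x : D) :
    dirac (r • c) x = r • dirac c x := by
  ext f
  simp [dirac, real_inner_smul_left]

set_option synthInstance.maxHeartbeats 1000000 in
lemma sparsify_aux {D H₁ H₂ : Type*} [MetricSpace D] [CompactSpace D]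
    [NormedAddCommGroup H₁] [InnerProductSpace ℝ H₁]
    [NormedAddCommGroup H₂] [InnerProductSpace ℝ H₂] [FiniteDimensional ℝ H₂]
    (S : StrongDual ℝ C(D, H₁) →ₗ[ℝ] H₂)
    (NS : ℕ) (hrank : Module.finrank ℝ (LinearMap.range S) = NS)
    (P : ℕ) (x : Fin P → D) :
    ∀ k (c : Fin P → H₁), (Finset.univ.filter fun n => c n ≠ 0).card ≤ k →
    ∃ c' : Fin P → H₁,
      S (∑ n, dirac (c' n) (x n)) = S (∑ n, dirac (c n) (x n)) ∧
      (∑ n, ‖c' n‖) ≤ (∑ n, ‖c n‖) ∧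
      (Finset.univ.filter fun n => c' n ≠ 0).card ≤ NS := by
  intro k
  induction k with
  | zero =>
    intro c hc
    exact ⟨c, rfl, le_rfl, by omega⟩
  | succ k ih =>
    intro c hc
    by_cases hle : (Finset.univ.filter fun n => c n ≠ 0).card ≤ NS
    · exact ⟨c, rfl, le_rfl, hle⟩
    push_neg at hle
    set T : Finset (Fin P) := Finset.univ.filter fun n => c n ≠ 0 with hTdef
    have hcT : ∀ n ∈ T, c n ≠ 0 := fun n hn => (Finset.mem_filter.mp hn).2
    set v : Fin P → H₂ := fun n => S (dirac (c n) (x n)) with hvdef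
    -- a nontrivial linear relation among the `v n`, `n ∈ T`, with nonnegative
    -- weighted sum of coefficients
    have hdep : ∃ g : T → ℝ, (∑ i : T, g i • v i.1 = 0) ∧ (∃ i, g i ≠ 0) ∧
        0 ≤ ∑ i : T, g i * ‖c i.1‖ := by
      have hnotind : ¬ LinearIndependent ℝ (fun i : T => (⟨v i.1, ⟨_, rfl⟩⟩ :
          LinearMap.range S)) := by
        intro h
        have := h.fintype_card_le_finrank
        rw [hrank, Fintype.card_coe] at this
        omega
      obtain ⟨g, hg0, i, hi⟩ := Fintype.not_linearIndependent_iff.mp hnotind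
      have hg0' : ∑ i : T, g i • v i.1 = 0 := by
        have := congrArg (Subtype.val) hg0
        simpa using this
      rcases le_total 0 (∑ i : T, g i * ‖c i.1‖) with hA | hA
      · exact ⟨g, hg0', ⟨i, hi⟩, hA⟩
      · refine ⟨-g, ?_, ⟨i, by simpa using hi⟩, ?_⟩
        · have : ∑ i : T, (-g) i • v i.1 = -∑ i : T, g i • v i.1 := by
            rw [← Finset.sum_neg_distrib]
            exact Finset.sum_congr rfl (fun i _ => by simp [neg_smul])
          rw [this, hg0', neg_zero]
        · have : ∑ i : T, (-g) i * ‖c i.1‖ = -∑ i : T, g i * ‖c i.1‖ := by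
            rw [← Finset.sum_neg_distrib]
            exact Finset.sum_congr rfl (fun i _ => by simp [Pi.neg_apply])
          rw [this]
          linarith
    obtain ⟨g, hg0, ⟨i, hi⟩, hA⟩ := hdep
    -- extend `g` by zero to `a : Fin P → ℝ`
    set a : Fin P → ℝ := fun n => if h : n ∈ T then g ⟨n, h⟩ else 0 with hadef
    have haT : ∀ i : T, a i.1 = g i := by
      intro i; simp [hadef, i.2]
    have ha_zero : ∀ n ∉ T, a n = 0 := by intro n hn; simp [hadef, hn]
    have hsumv : ∑ n, a n • v n = 0 := by
      rw [← Finset.sum_subset (Finset.subset_univ T)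
        (by intro n _ hn; rw [ha_zero n hn, zero_smul])]
      rw [← Finset.sum_attach T (fun n => a n • v n), ← hg0,
        ← Finset.sum_coe_sort_eq_attach T (fun n => a n • v n)]
      exact Finset.sum_congr rfl (fun i _ => by rw [haT])
    have hAa : 0 ≤ ∑ n, a n * ‖c n‖ := by
      rw [← Finset.sum_subset (Finset.subset_univ T)
        (by intro n _ hn; rw [ha_zero n hn, zero_mul])]
      rw [← Finset.sum_attach T (fun n => a n * ‖c n‖),
        ← Finset.sum_coe_sort_eq_attach T (fun n => a n * ‖c n‖)]
      calc (0:ℝ) ≤ ∑ i : T, g i * ‖c i.1‖ := hA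
        _ = _ := Finset.sum_congr rfl (fun i _ => by rw [haT])
    -- there is some `n` with `a n > 0`
    have hpos : ∃ n, 0 < a n := by
      by_contra h
      push_neg at h
      have hi' : a i.1 < 0 := lt_of_le_of_ne (h i.1) (by rw [haT]; exact hi)
      have hci : 0 < ‖c i.1‖ := norm_pos_iff.mpr (hcT i.1 i.2)
      have h1 : a i.1 * ‖c i.1‖ < 0 := mul_neg_of_neg_of_pos hi' hci
      have h2 : ∑ n ∈ Finset.univ.erase i.1, a n * ‖c n‖ ≤ 0 :=
        Finset.sum_nonpos (fun n _ => mul_nonpos_of_nonpos_of_nonneg (h n) (norm_nonneg _))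
      have h3 : a i.1 * ‖c i.1‖ + ∑ n ∈ Finset.univ.erase i.1, a n * ‖c n‖
          = ∑ n, a n * ‖c n‖ :=
        Finset.add_sum_erase Finset.univ (fun n => a n * ‖c n‖) (Finset.mem_univ i.1)
      linarith
    -- pick `m` maximizing `a`
    obtain ⟨n₀, hn₀⟩ := hpos
    obtain ⟨m, -, hm⟩ := Finset.exists_max_image Finset.univ a ⟨n₀, Finset.mem_univ n₀⟩
    have ham : 0 < a m := lt_of_lt_of_le hn₀ (hm n₀ (Finset.mem_univ n₀))
    set t : ℝ := -(a m)⁻¹ with htdef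
    have ht_neg : t < 0 := by
      rw [htdef]; exact neg_lt_zero.mpr (inv_pos.mpr ham)
    have hnn : ∀ n, 0 ≤ 1 + t * a n := by
      intro n
      have h1 : a n / a m ≤ 1 := (div_le_one ham).mpr (hm n (Finset.mem_univ n))
      have h2 : 1 + t * a n = 1 - a n / a m := by
        rw [htdef, div_eq_mul_inv]; ring
      rw [h2]
      linarith
    have hm0 : 1 + t * a m = 0 := by
      rw [htdef]
      field_simp
      norm_num
    have hmT : m ∈ T := by
      by_contra h
      rw [ha_zero m h] at ham
      exact lt_irrefl 0 ham
    set c'' : Fin P → H₁ := fun n => (1 + t * a n) • c n with hc''def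
    have hsupp : (Finset.univ.filter fun n => c'' n ≠ 0) ⊆ T.erase m := by
      intro n hn
      rw [Finset.mem_filter] at hn
      refine Finset.mem_erase.mpr ⟨?_, ?_⟩
      · rintro rfl; exact hn.2 (by simp [hc''def, hm0])
      · rw [hTdef, Finset.mem_filter]
        refine ⟨Finset.mem_univ _, fun h0 => hn.2 (by simp [hc''def, h0])⟩
    have hcard'' : (Finset.univ.filter fun n => c'' n ≠ 0).card ≤ k := by
      have h1 := Finset.card_le_card hsupp
      rw [Finset.card_erase_of_mem hmT] at h1
      have h2 : 1 ≤ T.card := Finset.card_pos.mpr ⟨m, hmT⟩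
      omega
    -- `S` agrees on `c''` and `c`
    have hSsum : (∑ n, dirac (c'' n) (x n)) =
        (∑ n, dirac (c n) (x n)) + t • ∑ n, a n • dirac (c n) (x n) := by
      rw [Finset.smul_sum, ← Finset.sum_add_distrib]
      refine Finset.sum_congr rfl (fun n _ => ?_)
      simp only [hc''def]
      rw [dirac_smul, add_smul, one_smul, smul_smul]
    have hSeq : S (∑ n, dirac (c'' n) (x n)) = S (∑ n, dirac (c n) (x n)) := by
      have h0 : S (∑ n, a n • dirac (c n) (x n)) = 0 := by
        rw [map_sum]
        calc ∑ n, S (a n • dirac (c n) (x n)) = ∑ n, a n • v n :=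
              Finset.sum_congr rfl (fun n _ => by rw [map_smul])
          _ = 0 := hsumv
      rw [hSsum, map_add, map_smul, h0, smul_zero, add_zero]
    -- total variation does not increase
    have hnorm : ∑ n, ‖c'' n‖ ≤ ∑ n, ‖c n‖ := by
      have h1 : ∑ n, ‖c'' n‖ = ∑ n, ‖c n‖ + t * ∑ n, a n * ‖c n‖ := by
        rw [Finset.mul_sum, ← Finset.sum_add_distrib]
        refine Finset.sum_congr rfl (fun n _ => ?_)
        simp only [hc''def]
        rw [norm_smul, Real.norm_eq_abs, abs_of_nonneg (hnn n)]
        ring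
      have h2 : t * ∑ n, a n * ‖c n‖ ≤ 0 :=
        mul_nonpos_of_nonpos_of_nonneg ht_neg.le hAa
      linarith
    obtain ⟨c', h1, h2, h3⟩ := ih c'' hcard''
    exact ⟨c', h1.trans hSeq, h2.trans hnorm, h3⟩

/-- Let `H₁, H₂` be separable real Hilbert spaces with `H₂`
finite-dimensional, `D` a compact metric space and `S : M(D,H₁) → H₂` a linear operator,
continuous from the weak-* topology (into the weak = norm topology of the
finite-dimensional `H₂`), whose range has dimension `N_S`.  If
`u = ∑_{n=1}^P c_n δ_{x_n}` is a discrete measure with pairwise distinct points `x_n`,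
then there exists `u' = ∑_{n=1}^P c'_n δ_{x_n}` with `S u' = S u`, total variation norm
`∑ ‖c'_n‖ ≤ ∑ ‖c_n‖`, and at most `N_S` of the coefficients `c'_n` nonzero. -/
theorem sparsify_discrete_measure
    (D H₁ H₂ : Type*) [MetricSpace D] [CompactSpace D]
    [NormedAddCommGroup H₁] [InnerProductSpace ℝ H₁] [CompleteSpace H₁]
    [TopologicalSpace.SeparableSpace H₁]
    [NormedAddCommGroup H₂] [InnerProductSpace ℝ H₂] [FiniteDimensional ℝ H₂]
    (S : StrongDual ℝ C(D, H₁) →ₗ[ℝ] H₂)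
    (hScont : Continuous fun u : WeakDual ℝ C(D, H₁) => S (WeakDual.toStrongDual u))
    (NS : ℕ) (hrank : Module.finrank ℝ (LinearMap.range S) = NS)
    (P : ℕ) (c : Fin P → H₁) (x : Fin P → D) (hx : Function.Injective x) :
    ∃ c' : Fin P → H₁,
      S (∑ n, dirac (c' n) (x n)) = S (∑ n, dirac (c n) (x n)) ∧
      (∑ n, ‖c' n‖) ≤ (∑ n, ‖c n‖) ∧
      (Finset.univ.filter fun n => c' n ≠ 0).card ≤ NS := by
  exact sparsify_aux S NS hrank P x
    (Finset.univ.filter fun n => c n ≠ 0).card c le_rfl
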